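/- Let C : E × E × E → ℝ be an alternating trilinear form (a 3-form). Then: (i) C^{-,-} is alternating; (ii) C^{+,+}(X,Y,Z) = C^{+,-}(Z,X,Y) and C^{-,+}(X,Y,Z) = C^{+,-}(Y,Z,X) for all X, Y, Z ∈ E; (iii) consequently C^{**} := C^{+,+} + C^{+,-} + C^{-,+} is an alternating trilinear form and C^{**} = Skew(C^{ε,ε'}) for every pair (ε, ε') ≠ (-,-), where Skew(D)(X,Y,Z) := D(X,Y,Z) + D(Y,Z,X) + D(Z,X,Y). -/
import Mathlib


/-- The `(ε, ε')`-component `C^{ε,ε'}` of a trilinear form `C` on `E` with respect to a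
linear complex structure `J`:
`C^{ε,ε'}(X,Y,Z) = -(1/4)·(εε'·C(JX,JY,Z) - ε·C(JX,Y,JZ) - ε'·C(X,JY,JZ) - C(X,Y,Z))`. -/
noncomputable def Tcomp {E : Type*} [AddCommGroup E] [Module ℝ E] (J : E →ₗ[ℝ] E)
    (C : E →ₗ[ℝ] E →ₗ[ℝ] E →ₗ[ℝ] ℝ) (ε ε' : ℝ) (X Y Z : E) : ℝ :=
  -(4⁻¹ : ℝ) * ((ε * ε') * C (J X) (J Y) Z - ε * C (J X) Y (J Z)
    - ε' * C X (J Y) (J Z) - C X Y Z)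

/-- For a linear complex structure `J` on a real vector space `E` and an alternating
trilinear form (3-form) `C` on `E`: (i) `C^{-,-}` is alternating; (ii)
`C^{+,+}(X,Y,Z) = C^{+,-}(Z,X,Y)` and `C^{-,+}(X,Y,Z) = C^{+,-}(Y,Z,X)`;
(iii) `C^{**} := C^{+,+} + C^{+,-} + C^{-,+}` is an alternating trilinear form and
`C^{**} = Skew(C^{ε,ε'})` for every `(ε,ε') ≠ (-,-)`, where
`Skew(D)(X,Y,Z) = D(X,Y,Z) + D(Y,Z,X) + D(Z,X,Y)`. -/
theorem stmt_19 {E : Type*} [AddCommGroup E] [Module ℝ E] (J : E →ₗ[ℝ] E)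
    (hJ : ∀ x, J (J x) = -x) (C : E →ₗ[ℝ] E →ₗ[ℝ] E →ₗ[ℝ] ℝ)
    (hC1 : ∀ X Y Z, C X Y Z = -C Y X Z) (hC2 : ∀ X Y Z, C X Y Z = -C X Z Y) :
    ((∀ X Y Z, Tcomp J C (-1) (-1) X Y Z = -Tcomp J C (-1) (-1) Y X Z) ∧
     (∀ X Y Z, Tcomp J C (-1) (-1) X Y Z = -Tcomp J C (-1) (-1) X Z Y)) ∧
    (∀ X Y Z, Tcomp J C 1 1 X Y Z = Tcomp J C 1 (-1) Z X Y) ∧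
    (∀ X Y Z, Tcomp J C (-1) 1 X Y Z = Tcomp J C 1 (-1) Y Z X) ∧
    ((∀ X Y Z,
        Tcomp J C 1 1 X Y Z + Tcomp J C 1 (-1) X Y Z + Tcomp J C (-1) 1 X Y Z =
        -(Tcomp J C 1 1 Y X Z + Tcomp J C 1 (-1) Y X Z + Tcomp J C (-1) 1 Y X Z)) ∧
     (∀ X Y Z,
        Tcomp J C 1 1 X Y Z + Tcomp J C 1 (-1) X Y Z + Tcomp J C (-1) 1 X Y Z =
        -(Tcomp J C 1 1 X Z Y + Tcomp J C 1 (-1) X Z Y + Tcomp J C (-1) 1 X Z Y))) ∧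
    (∀ ε ∈ ({1, -1} : Set ℝ), ∀ ε' ∈ ({1, -1} : Set ℝ), (ε, ε') ≠ (-1, -1) →
      ∀ X Y Z,
        Tcomp J C 1 1 X Y Z + Tcomp J C 1 (-1) X Y Z + Tcomp J C (-1) 1 X Y Z =
        Tcomp J C ε ε' X Y Z + Tcomp J C ε ε' Y Z X + Tcomp J C ε ε' Z X Y) := by

  have hcyc : ∀ a b c : E, C a b c = C b c a := fun a b c => by
    rw [hC1 a b c, hC2 b a c]; ring
  refine ⟨⟨?_, ?_⟩, ?_, ?_, ⟨?_, ?_⟩, ?_⟩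
  · intro X Y Z
    simp only [Tcomp]
    linarith [hC1 (J X) (J Y) Z, hC1 X (J Y) (J Z), hC1 (J X) Y (J Z), hC1 X Y Z]
  · intro X Y Z
    simp only [Tcomp]
    linarith [hC2 (J X) (J Y) Z, hC2 X (J Y) (J Z), hC2 (J X) Y (J Z), hC2 X Y Z]
  · intro X Y Z
    simp only [Tcomp]
    linarith [hcyc (J Z) (J X) Y, hcyc (J Z) X (J Y), hcyc Z (J X) (J Y), hcyc Z X Y]
  · intro X Y Z
    simp only [Tcomp]
    linarith [hcyc X (J Y) (J Z), hcyc (J X) (J Y) Z, hcyc (J X) Y (J Z), hcyc X Y Z]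
  · intro X Y Z
    simp only [Tcomp]
    linarith [hC1 (J X) (J Y) Z, hC1 X (J Y) (J Z), hC1 (J X) Y (J Z), hC1 X Y Z]
  · intro X Y Z
    simp only [Tcomp]
    linarith [hC2 (J X) (J Y) Z, hC2 X (J Y) (J Z), hC2 (J X) Y (J Z), hC2 X Y Z]
  · intro e he e' he' hne X Y Z
    have hco : ∀ a b c : E,
        Tcomp J C 1 1 a b c + Tcomp J C 1 (-1) a b c + Tcomp J C (-1) 1 a b c =
        4⁻¹ * (C (J a) (J b) c + C (J a) b (J c) + C a (J b) (J c) + 3 * C a b c) := by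
      intro a b c; simp only [Tcomp]; ring
    rw [hco X Y Z]
    rcases he with rfl | he <;> rcases he' with rfl | he'
    · simp only [Tcomp]
      linarith [hcyc X Y Z, hcyc Y Z X, hcyc (J X) (J Y) Z, hcyc (J Y) (J Z) X,
        hcyc (J Z) (J X) Y, hcyc (J X) Y (J Z), hcyc (J Y) Z (J X), hcyc (J Z) X (J Y),
        hcyc X (J Y) (J Z), hcyc Y (J Z) (J X), hcyc Z (J X) (J Y)]
    · simp only [Set.mem_singleton_iff] at he'
      subst he'
      simp only [Tcomp]
      linarith [hcyc X Y Z, hcyc Y Z X, hcyc (J X) (J Y) Z, hcyc (J Y) (J Z) X,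
        hcyc (J Z) (J X) Y, hcyc (J X) Y (J Z), hcyc (J Y) Z (J X), hcyc (J Z) X (J Y),
        hcyc X (J Y) (J Z), hcyc Y (J Z) (J X), hcyc Z (J X) (J Y)]
    · simp only [Set.mem_singleton_iff] at he
      subst he
      simp only [Tcomp]
      linarith [hcyc X Y Z, hcyc Y Z X, hcyc (J X) (J Y) Z, hcyc (J Y) (J Z) X,
        hcyc (J Z) (J X) Y, hcyc (J X) Y (J Z), hcyc (J Y) Z (J X), hcyc (J Z) X (J Y),
        hcyc X (J Y) (J Z), hcyc Y (J Z) (J X), hcyc Z (J X) (J Y)]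
    · simp only [Set.mem_singleton_iff] at he he'
      subst he; subst he'
      exact absurd rfl hne
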